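/- Let M be an m×n real matrix with nonnegative entries whose primary bipartite graph PG is acyclic (contains no cycle). Then both M Mᵀ and Mᵀ M have chordal sparsity patterns. -/

import Mathlib

open Matrix

/-- A cycle `w` (a closed walk) in a simple graph `G` has a chord if there is an edge of `G`
joining two vertices of the cycle that is not one of the edges of the cycle (equivalently, for a
cycle, the two vertices are not consecutive on the cycle). -/
def SimpleGraph.Walk.HasChord {V : Type*} {G : SimpleGraph V} {v : V} (w : G.Walk v v) : Prop :=
  ∃ x y : V, x ∈ w.support ∧ y ∈ w.support ∧ G.Adj x y ∧ s(x, y) ∉ w.edges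

/-- A simple graph is chordal if every cycle of length at least 4 has a chord. -/
def SimpleGraph.IsChordalGraph {V : Type*} (G : SimpleGraph V) : Prop :=
  ∀ ⦃v : V⦄ (w : G.Walk v v), w.IsCycle → 4 ≤ w.length → w.HasChord

/-- The primary bipartite graph of an `m × n` matrix `M`: vertices `Fin m ⊕ Fin n`, with an edge
between left vertex `i` and right vertex `j` iff `M i j ≠ 0`, and no edges within a part. -/
def primaryGraph {m n : ℕ} (M : Matrix (Fin m) (Fin n) ℝ) : SimpleGraph (Fin m ⊕ Fin n) :=
  SimpleGraph.fromRel (fun a b => ∃ i j, a = Sum.inl i ∧ b = Sum.inr j ∧ M i j ≠ 0)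

/-- The sparsity-pattern graph of a square matrix `B`: distinct `i`, `i'` are adjacent
whenever `B i i' ≠ 0`. -/
def sparsityGraph {k : ℕ} (B : Matrix (Fin k) (Fin k) ℝ) : SimpleGraph (Fin k) :=
  SimpleGraph.fromRel (fun i i' => B i i' ≠ 0)

/-!
The sparsity graph of `M Mᵀ` is the projection of the bipartite graph `PG` onto its left part:
two rows are adjacent when they share a column neighbour (nonnegativity rules out cancellation).
Take a cycle `v, c, …, z, v` of length at least four in this projection, and common neighbours
`m` of `v, c` and `m'` of `z, v` in `PG`. If `m = m'`, then `c` and `z` share the neighbour `m`,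
which gives a chord. Otherwise lifting the path `c, …, z` to `PG` yields a walk
`v, m', z, …, c, m` avoiding the edge `v m`, so that edge is not a bridge and `PG` has a cycle.
`Mᵀ M` is the same statement for `Mᵀ`.
-/

open SimpleGraph Sum

namespace SimpleGraph

variable {α β : Type*} {G : SimpleGraph (α ⊕ β)}

def leftProjection (G : SimpleGraph (α ⊕ β)) : SimpleGraph α where
  Adj a b := a ≠ b ∧ ∃ j, G.Adj (inl a) (inr j) ∧ G.Adj (inl b) (inr j)
  symm := ⟨fun _ _ ⟨hne, j, ha, hb⟩ => ⟨hne.symm, j, hb, ha⟩⟩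
  loopless := ⟨fun _ h => h.1 rfl⟩

lemma Walk.exists_lift_of_leftProjection {a b : α} (p : G.leftProjection.Walk a b) :
    ∃ W : G.Walk (inl a) (inl b), ∀ x, inl x ∈ W.support → x ∈ p.support := by
  induction p with
  | nil => exact ⟨.nil, by simp⟩
  | cons h _ ih =>
    obtain ⟨W, hW⟩ := ih
    obtain ⟨-, j, haj, hbj⟩ := h
    refine ⟨.cons haj (.cons hbj.symm W), fun x hx => ?_⟩
    simp only [Walk.support_cons, List.mem_cons, inl.injEq, reduceCtorEq, false_or] at hx
    exact List.mem_cons.2 (hx.imp_right (hW x))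

lemma IsAcyclic.hasChord_cons_concat (hG : G.IsAcyclic) {v c z : α}
    (hvc : G.leftProjection.Adj v c) (q : G.leftProjection.Walk c z)
    (hzv : G.leftProjection.Adj z v) (hw : (Walk.cons hvc (q.concat hzv)).IsCycle)
    (hlen : 2 ≤ q.length) : (Walk.cons hvc (q.concat hzv)).HasChord := by
  rw [Walk.cons_isCycle_iff, Walk.concat_isPath_iff] at hw
  obtain ⟨⟨hq, hvq⟩, -⟩ := hw
  have hzq : z ∈ q.support := q.end_mem_support
  obtain ⟨-, m, hvm, hcm⟩ := id hvc
  obtain ⟨-, m', hzm', hvm'⟩ := id hzv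
  by_cases hmm' : m' = m
  · subst hmm'
    have hcz : c ≠ z := by
      rintro rfl
      simp [Walk.length_eq_zero_iff.2 (Walk.isPath_iff_nil.1 hq)] at hlen
    refine ⟨c, z, by simp, by simp [hzq], ⟨hcz, m', hcm, hzm'⟩, ?_⟩
    have hczq : s(c, z) ∉ q.edges := fun h => by
      have := hq.length_eq_one_of_mem_edges h
      omega
    simp only [Walk.edges_cons, Walk.edges_concat, List.mem_cons, Sym2.eq_iff]
    grind [hvc.ne]
  · exfalso
    obtain ⟨W, hW⟩ := q.exists_lift_of_leftProjection
    have hbridge := isAcyclic_iff_forall_adj_isBridge.1 hG hvm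
    refine absurd (isBridge_iff_forall_walk_mem_edges.1 hbridge
      (.cons hvm' (.cons hzm'.symm (W.reverse.concat hcm)))) ?_
    have hWv : s(inl v, inr m) ∉ W.edges := fun h => hvq (hW v (W.fst_mem_support_of_mem_edges h))
    simp only [Walk.edges_cons, Walk.edges_concat, Walk.edges_reverse, List.mem_cons,
      Sym2.eq_iff, inl.injEq, inr.injEq, reduceCtorEq]
    grind [hvc.ne]

theorem IsAcyclic.isChordalGraph_leftProjection (hG : G.IsAcyclic) :
    G.leftProjection.IsChordalGraph := by
  rintro v (_ | ⟨hvc, q⟩) hw hlen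
  · simp at hlen
  have hq : ¬ q.Nil := Walk.not_nil_of_isCycle_cons hw
  rw [← Walk.concat_dropLast (q.adj_penultimate hq)] at hw hlen ⊢
  refine hG.hasChord_cons_concat hvc _ _ hw ?_
  simp only [Walk.length_cons, Walk.length_concat] at hlen
  omega

end SimpleGraph

lemma Matrix.mul_transpose_apply_ne_zero_iff {R ι κ : Type*} [Fintype κ] [Semiring R]
    [PartialOrder R] [IsOrderedRing R] [NoZeroDivisors R] {M : Matrix ι κ R}
    (hM : ∀ i j, 0 ≤ M i j) (a b : ι) :
    (M * Mᵀ) a b ≠ 0 ↔ ∃ j, M a j ≠ 0 ∧ M b j ≠ 0 := by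
  simp only [mul_apply, transpose_apply, ne_eq,
    Finset.sum_eq_zero_iff_of_nonneg fun j _ => mul_nonneg (hM a j) (hM b j), Finset.mem_univ,
    true_implies, not_forall, mul_eq_zero, not_or]

lemma sparsityGraph_mul_transpose {m n : ℕ} {M : Matrix (Fin m) (Fin n) ℝ}
    (hM : ∀ i j, 0 ≤ M i j) : sparsityGraph (M * Mᵀ) = (primaryGraph M).leftProjection := by
  ext a b
  simp [sparsityGraph, primaryGraph, leftProjection, mul_transpose_apply_ne_zero_iff hM, and_comm]

lemma sparsityGraph_transpose_mul {m n : ℕ} {M : Matrix (Fin m) (Fin n) ℝ}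
    (hM : ∀ i j, 0 ≤ M i j) : sparsityGraph (Mᵀ * M) = (primaryGraph Mᵀ).leftProjection := by
  simpa only [transpose_transpose] using sparsityGraph_mul_transpose (M := Mᵀ) fun j i => hM i j

lemma primaryGraph_transpose {m n : ℕ} (M : Matrix (Fin m) (Fin n) ℝ) :
    primaryGraph Mᵀ = (primaryGraph M).comap Sum.swap := by
  ext x y
  cases x <;> cases y <;> simp [primaryGraph]

/-- If the primary bipartite graph of a nonnegative matrix `M` is acyclic, then both `M * Mᵀ`
and `Mᵀ * M` have chordal sparsity patterns. -/
theorem chordal_of_acyclic {m n : ℕ} (M : Matrix (Fin m) (Fin n) ℝ)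
    (hM : ∀ i j, 0 ≤ M i j)
    (hacyclic : (primaryGraph M).IsAcyclic) :
    (sparsityGraph (M * Mᵀ)).IsChordalGraph ∧ (sparsityGraph (Mᵀ * M)).IsChordalGraph := by
  have hacyclic' : (primaryGraph Mᵀ).IsAcyclic := by
    rw [primaryGraph_transpose]
    exact hacyclic.comap (Hom.comap _ _) Sum.swap_leftInverse.injective
  rw [sparsityGraph_mul_transpose hM, sparsityGraph_transpose_mul hM]
  exact ⟨hacyclic.isChordalGraph_leftProjection, hacyclic'.isChordalGraph_leftProjection⟩
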